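/- The map g : {(a,u) ∈ ℝ×ℂ : a ≥ |u|} → ℂ⁴ defined by g(a,u) = (u(a+√(a²−|u|²))^{−1/2}, 0, 0, (a+√(a²−|u|²))^{1/2}) for (a,u) ≠ (0,0) and g(0,0)=0 is continuous and satisfies β(g(a,u)) = (a,u), where β(z) = (½∑|zₖ|², z₁z₄−z₂z₃). -/

import Mathlib

noncomputable def β (z : ℂ × ℂ × ℂ × ℂ) : ℝ × ℂ :=
  ((‖z.1‖ ^ 2 + ‖z.2.1‖ ^ 2 + ‖z.2.2.1‖ ^ 2 +
      ‖z.2.2.2‖ ^ 2) / 2,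
    z.1 * z.2.2.2 - z.2.1 * z.2.2.1)

noncomputable def g (p : ℝ × ℂ) : ℂ × ℂ × ℂ × ℂ :=
  (p.2 / (Real.sqrt (p.1 + Real.sqrt (p.1 ^ 2 - ‖p.2‖ ^ 2)) : ℂ), 0, 0,
    (Real.sqrt (p.1 + Real.sqrt (p.1 ^ 2 - ‖p.2‖ ^ 2)) : ℂ))

theorem g_section_of_beta :
    ContinuousOn g {p : ℝ × ℂ | ‖p.2‖ ≤ p.1} ∧
      ∀ p ∈ {p : ℝ × ℂ | ‖p.2‖ ≤ p.1}, β (g p) = p := by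
  set S : Set (ℝ × ℂ) := {p : ℝ × ℂ | ‖p.2‖ ≤ p.1} with hS
  have hcont_s : Continuous
      (fun p : ℝ × ℂ => Real.sqrt (p.1 + Real.sqrt (p.1 ^ 2 - ‖p.2‖ ^ 2))) := by
    exact Real.continuous_sqrt.comp (continuous_fst.add (Real.continuous_sqrt.comp
      ((continuous_fst.pow 2).sub (continuous_snd.norm.pow 2))))
  constructor
  · intro p hp
    have hp' : ‖p.2‖ ≤ p.1 := hp
    have ha : 0 ≤ p.1 := le_trans (norm_nonneg _) hp'
    have h4 : ContinuousWithinAt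
        (fun q : ℝ × ℂ => ((Real.sqrt (q.1 + Real.sqrt (q.1 ^ 2 - ‖q.2‖ ^ 2)) : ℝ) : ℂ))
        S p := (Complex.continuous_ofReal.comp hcont_s).continuousWithinAt
    have h1 : ContinuousWithinAt
        (fun q : ℝ × ℂ => q.2 / ((Real.sqrt (q.1 + Real.sqrt (q.1 ^ 2 - ‖q.2‖ ^ 2)) : ℝ) : ℂ))
        S p := by
      rcases eq_or_lt_of_le ha with h0 | h0
      · -- p.1 = 0, so p = (0,0)
        have hu : p.2 = 0 := by
          have : ‖p.2‖ ≤ 0 := by rw [h0]; exact hp'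
          exact norm_eq_zero.mp (le_antisymm this (norm_nonneg _))
        have hval : p.2 / ((Real.sqrt (p.1 + Real.sqrt (p.1 ^ 2 - ‖p.2‖ ^ 2)) : ℝ) : ℂ)
            = 0 := by rw [hu]; simp
        rw [ContinuousWithinAt, hval]
        apply squeeze_zero_norm' (a := fun q : ℝ × ℂ => Real.sqrt q.1)
        · filter_upwards [self_mem_nhdsWithin] with q hq
          have hq' : ‖q.2‖ ≤ q.1 := hq
          have haq : 0 ≤ q.1 := le_trans (norm_nonneg _) hq'
          rcases eq_or_lt_of_le haq with hq0 | hq0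
          · have huq : q.2 = 0 := by
              have : ‖q.2‖ ≤ 0 := by rw [hq0]; exact hq'
              exact norm_eq_zero.mp (le_antisymm this (norm_nonneg _))
            rw [huq]; simp [Real.sqrt_nonneg]
          · have hr0 : 0 ≤ Real.sqrt (q.1 ^ 2 - ‖q.2‖ ^ 2) := Real.sqrt_nonneg _
            have hsle : Real.sqrt q.1 ≤ Real.sqrt (q.1 + Real.sqrt (q.1 ^ 2 - ‖q.2‖ ^ 2)) :=
              Real.sqrt_le_sqrt (by linarith)
            have hsa : 0 < Real.sqrt q.1 := Real.sqrt_pos.mpr hq0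
            have hnorm : ‖q.2 / ((Real.sqrt (q.1 + Real.sqrt (q.1 ^ 2 - ‖q.2‖ ^ 2)) : ℝ) : ℂ)‖
                = ‖q.2‖ / Real.sqrt (q.1 + Real.sqrt (q.1 ^ 2 - ‖q.2‖ ^ 2)) := by
              rw [norm_div, Complex.norm_real, Real.norm_of_nonneg (Real.sqrt_nonneg _)]
            rw [hnorm]
            calc ‖q.2‖ / Real.sqrt (q.1 + Real.sqrt (q.1 ^ 2 - ‖q.2‖ ^ 2))
                ≤ q.1 / Real.sqrt q.1 := by
                  apply div_le_div₀ haq hq' hsa hsle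
              _ = Real.sqrt q.1 := Real.div_sqrt
        · have ht : Filter.Tendsto (fun q : ℝ × ℂ => Real.sqrt q.1) (nhds p)
              (nhds (Real.sqrt p.1)) := (Real.continuous_sqrt.comp continuous_fst).tendsto p
          have hz : Real.sqrt p.1 = 0 := by rw [← h0, Real.sqrt_zero]
          rw [hz] at ht
          exact ht.mono_left nhdsWithin_le_nhds
      · -- p.1 > 0: denominator nonzero
        apply ContinuousWithinAt.div continuous_snd.continuousWithinAt h4
        have hr0 : 0 ≤ Real.sqrt (p.1 ^ 2 - ‖p.2‖ ^ 2) := Real.sqrt_nonneg _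
        have : 0 < Real.sqrt (p.1 + Real.sqrt (p.1 ^ 2 - ‖p.2‖ ^ 2)) :=
          Real.sqrt_pos.mpr (by linarith)
        exact_mod_cast Complex.ofReal_ne_zero.mpr (ne_of_gt this)
    exact h1.prodMk (continuousWithinAt_const.prodMk (continuousWithinAt_const.prodMk h4))
  · intro p hp
    obtain ⟨a, u⟩ := p
    have hp' : ‖u‖ ≤ a := hp
    have ha : 0 ≤ a := le_trans (norm_nonneg _) hp'
    have hr2 : Real.sqrt (a ^ 2 - ‖u‖ ^ 2) ^ 2 = a ^ 2 - ‖u‖ ^ 2 :=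
      Real.sq_sqrt (by nlinarith [norm_nonneg u])
    have hr0 : 0 ≤ Real.sqrt (a ^ 2 - ‖u‖ ^ 2) := Real.sqrt_nonneg _
    set r := Real.sqrt (a ^ 2 - ‖u‖ ^ 2) with hr
    have hs2 : Real.sqrt (a + r) ^ 2 = a + r := Real.sq_sqrt (by linarith)
    have hs0 : 0 ≤ Real.sqrt (a + r) := Real.sqrt_nonneg _
    set s := Real.sqrt (a + r) with hsdef
    rcases eq_or_lt_of_le ha with h0 | h0
    · have hu : u = 0 := by
        have : ‖u‖ ≤ 0 := by rw [h0]; exact hp'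
        exact norm_eq_zero.mp (le_antisymm this (norm_nonneg _))
      subst hu
      simp only [g, β, ← h0]
      norm_num
    · have hspos : 0 < s := Real.sqrt_pos.mpr (by linarith)
      have hsne : (s : ℂ) ≠ 0 := Complex.ofReal_ne_zero.mpr (ne_of_gt hspos)
      simp only [g, β]
      rw [← hr, ← hsdef]
      refine Prod.ext ?_ ?_
      · simp only [norm_div, Complex.norm_real, Real.norm_of_nonneg hs0, norm_zero]
        field_simp
        nlinarith [hs2, hr2, norm_nonneg u]
      · simp only []
        field_simp
        ring
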